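/- arXiv:0807.1958 — 2 statements merged into one kernel-verified Lean document; each statement's English description precedes it below -/
import Mathlib

section
/- Let A and B be m×m complex matrices each having all eigenspaces one-dimensional, and suppose there exists a basis in which A is upper-triangular and B is lower-triangular (with fixed orderings of diagonal entries). Then such a basis is unique up to an invertible diagonal transformation: if g, h ∈ GL(m,ℂ) both satisfy g⁻¹Ag upper-triangular with the given diagonal order and g⁻¹Bg lower-triangular with the given diagonal order (and similarly for h), and A and B are diagonalizable, then g⁻¹h is diagonal. -/
def OneDimEig {m : ℕ} (A : Matrix (Fin m) (Fin m) ℂ) : Prop :=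
  ∀ μ : ℂ, LinearMap.ker (Matrix.toLin' (A - μ • 1)) ≠ ⊥ →
    Module.finrank ℂ (LinearMap.ker (Matrix.toLin' (A - μ • 1))) = 1

def IsUpper {m : ℕ} (A : Matrix (Fin m) (Fin m) ℂ) : Prop :=
  ∀ i j : Fin m, j < i → A i j = 0

def IsLower {m : ℕ} (A : Matrix (Fin m) (Fin m) ℂ) : Prop :=
  ∀ i j : Fin m, i < j → A i j = 0

/-!
`C = g⁻¹h` intertwines the two upper-triangular forms `h⁻¹Ah`, `g⁻¹Ag` of `A`, and the two
lower-triangular forms of `B`. Comparing entries of `C * h⁻¹Ah = g⁻¹Ag * C` strictly below the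
diagonal, from the lower-left corner inwards, gives `(dA j - dA i) * C i j = 0`; so `C` is upper
triangular as soon as the entries of `dA` are distinct, and likewise lower triangular.

Distinctness: in a diagonal form `D` of `A`, every `D - μ` has rank at least `m - 1` (rank is
invariant under conjugation and eigenspaces are lines), so each value occurs at most once on the
diagonal of `D`. Both `dA` and that diagonal list the roots of the characteristic polynomial of
`A` with multiplicity.
-/

open Matrix Polynomial Function Finset Module

theorem Units.inv_mul_mul_conj {M : Type*} [Monoid M] (g h : Mˣ) (a : M) :
    (↑g⁻¹ : M) * (↑h : M) * ((↑h⁻¹ : M) * a * (↑h : M)) =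
      (↑g⁻¹ : M) * a * (↑g : M) * ((↑g⁻¹ : M) * (↑h : M)) := by
  rw [← mul_assoc, ← mul_assoc, ← mul_assoc, Units.mul_inv_cancel_right, Units.mul_inv_cancel_right]

theorem Polynomial.injective_of_prod_X_sub_C_eq {ι R : Type*} [Fintype ι] [CommRing R]
    [IsDomain R] {d e : ι → R} (he : Injective e) (h : ∏ i, (X - C (d i)) = ∏ i, (X - C (e i))) :
    Injective d := by
  have hroots (f : ι → R) : (∏ i, (X - C (f i))).roots = univ.val.map f := by
    rw [← roots_multiset_prod_X_sub_C (univ.val.map f), Multiset.map_map]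
    rfl
  rw [← Fintype.nodup_map_univ_iff_injective, ← hroots, h, hroots]
  exact Fintype.nodup_map_univ_iff_injective.2 he

namespace Matrix

variable {n R : Type*} [Fintype n] [CommRing R]

section Conjugation

variable [DecidableEq n]

theorem charpoly_units_inv_conj (u : (Matrix n n R)ˣ) (A : Matrix n n R) :
    ((↑u⁻¹ : Matrix n n R) * A * (↑u : Matrix n n R)).charpoly = A.charpoly := by
  rw [coe_units_inv]
  exact charpoly_units_conj' u A

theorem rank_units_inv_conj (u : (Matrix n n R)ˣ) (A : Matrix n n R) :
    ((↑u⁻¹ : Matrix n n R) * A * (↑u : Matrix n n R)).rank = A.rank := by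
  rw [rank_mul_eq_left_of_isUnit_det _ _ (isUnits_det_units u),
    rank_mul_eq_right_of_isUnit_det _ _ (isUnits_det_units u⁻¹)]

theorem units_inv_conj_sub_smul_one (u : (Matrix n n R)ˣ) (A : Matrix n n R) (μ : R) :
    (↑u⁻¹ : Matrix n n R) * A * (↑u : Matrix n n R) - μ • 1 =
      (↑u⁻¹ : Matrix n n R) * (A - μ • 1) * (↑u : Matrix n n R) := by
  simp [mul_sub, sub_mul]

theorem charpoly_of_isLowerTriangular [LinearOrder n] (M : Matrix n n R)
    (h : M.IsLowerTriangular) : M.charpoly = ∏ i, (X - C (M i i)) := by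
  rw [← charpoly_transpose, charpoly_of_isUpperTriangular Mᵀ fun i j hij => h hij]
  rfl

theorem injective_diag_of_isDiag {K : Type*} [Field K] {D : Matrix n n K} (hD : D.IsDiag)
    (h : ∀ μ : K, Fintype.card n ≤ (D - μ • 1).rank + 1) : Injective D.diag := by
  classical
  intro i j hij
  by_contra hne
  have hsub : D - D i i • 1 = diagonal fun k => D k k - D i i := by
    conv_lhs => rw [← hD.diagonal_diag]
    ext k l
    by_cases hkl : k = l <;> simp [hkl]
  have htwo : 1 < Fintype.card {k // D k k - D i i = 0} :=
    Fintype.one_lt_card_iff.2 ⟨⟨i, sub_self _⟩, ⟨j, sub_eq_zero.2 hij.symm⟩, by simpa using hne⟩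
  have := h (D i i)
  rw [hsub, rank_diagonal, Fintype.card_subtype_compl] at this
  have := Fintype.card_subtype_le fun k => D k k - D i i = 0
  omega

end Conjugation

section Intertwining

variable [LinearOrder n] [NoZeroDivisors R]

theorem isUpperTriangular_of_mul_eq_mul {U U' C : Matrix n n R} {d : n → R} (hd : Injective d)
    (hU : U.IsUpperTriangular) (hU' : U'.IsUpperTriangular)
    (hUd : ∀ i, U i i = d i) (hU'd : ∀ i, U' i i = d i) (hC : C * U' = U * C) :
    C.IsUpperTriangular := by
  intro i j hji
  -- The other terms of the `(i, j)` entry of `hC` involve `C i k` with `k < j` and `C k j` with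
  -- `i < k`, which lie further below the diagonal.
  induction j using WellFoundedLT.induction generalizing i with
  | ind j ihj =>
  induction i using WellFoundedGT.induction with
  | ind i ihi =>
  have hleft : (C * U') i j = C i j * d j := by
    rw [mul_apply, Finset.sum_eq_single j, hU'd]
    · intro k _ hkj
      rcases hkj.lt_or_gt with hk | hk
      · rw [ihj k hk (hk.trans hji), zero_mul]
      · rw [hU' hk, mul_zero]
    · simp
  have hright : (U * C) i j = d i * C i j := by
    rw [mul_apply, Finset.sum_eq_single i, hUd]
    · intro k _ hki
      rcases hki.lt_or_gt with hk | hk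
      · rw [hU hk, zero_mul]
      · rw [ihi k hk (hji.trans hk), mul_zero]
    · simp
  have : (d j - d i) * C i j = 0 := by
    linear_combination hleft.symm.trans ((congrFun₂ hC i j).trans hright)
  exact (mul_eq_zero.1 this).resolve_left (sub_ne_zero.2 (hd.ne hji.ne))

theorem isLowerTriangular_of_mul_eq_mul {L L' C : Matrix n n R} {d : n → R} (hd : Injective d)
    (hL : L.IsLowerTriangular) (hL' : L'.IsLowerTriangular)
    (hLd : ∀ i, L i i = d i) (hL'd : ∀ i, L' i i = d i) (hC : C * L' = L * C) :
    C.IsLowerTriangular := by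
  have hCt : Cᵀ * Lᵀ = L'ᵀ * Cᵀ := by rw [← transpose_mul, ← transpose_mul, hC]
  exact fun i j hij => isUpperTriangular_of_mul_eq_mul hd (fun _ _ h => hL' h) (fun _ _ h => hL h)
    hL'd hLd hCt hij

end Intertwining

end Matrix

theorem isUpper_iff_isUpperTriangular {m : ℕ} (M : Matrix (Fin m) (Fin m) ℂ) :
    IsUpper M ↔ M.IsUpperTriangular :=
  Iff.rfl

theorem isLower_iff_isLowerTriangular {m : ℕ} (M : Matrix (Fin m) (Fin m) ℂ) :
    IsLower M ↔ M.IsLowerTriangular :=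
  Iff.rfl

theorem OneDimEig.card_le_rank_sub_smul_one_add_one {m : ℕ} {A : Matrix (Fin m) (Fin m) ℂ}
    (hA : OneDimEig A) (μ : ℂ) : m ≤ (A - μ • 1).rank + 1 := by
  have hker : finrank ℂ (LinearMap.ker (toLin' (A - μ • 1))) ≤ 1 := by
    by_cases h0 : LinearMap.ker (toLin' (A - μ • 1)) = ⊥
    · rw [h0, finrank_bot]
      exact zero_le_one
    · exact (hA μ h0).le
  have := LinearMap.finrank_range_add_finrank_ker (toLin' (A - μ • 1))
  rw [finrank_fin_fun] at this
  rw [rank, ← toLin'_apply']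
  omega

theorem OneDimEig.injective_of_charpoly_eq {m : ℕ} {A : Matrix (Fin m) (Fin m) ℂ}
    (hA : OneDimEig A)
    (hAd : ∃ u : GL (Fin m) ℂ,
      ((↑u⁻¹ : Matrix (Fin m) (Fin m) ℂ) * A * (↑u : Matrix (Fin m) (Fin m) ℂ)).IsDiag)
    {d : Fin m → ℂ} (hd : A.charpoly = ∏ i, (X - C (d i))) : Injective d := by
  obtain ⟨u, hu⟩ := hAd
  have hdiag := injective_diag_of_isDiag hu fun μ => by
    rw [units_inv_conj_sub_smul_one, rank_units_inv_conj, Fintype.card_fin]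
    exact hA.card_le_rank_sub_smul_one_add_one μ
  refine injective_of_prod_X_sub_C_eq hdiag ?_
  rw [← hd, ← charpoly_units_inv_conj u A, ← charpoly_diagonal, hu.diagonal_diag]

/-- for diagonalizable `A`, `B` with one-dimensional eigenspaces, a basis
in which `A` is upper-triangular and `B` is lower-triangular with prescribed diagonal
orders is unique up to an invertible diagonal transformation. -/
theorem common_triangularizing_basis_unique {m : ℕ}
    (A B : Matrix (Fin m) (Fin m) ℂ)
    (hA : OneDimEig A) (hB : OneDimEig B)
    (hAd : ∃ u : GL (Fin m) ℂ,
      Matrix.IsDiag ((↑u⁻¹ : Matrix (Fin m) (Fin m) ℂ) * A * (↑u : Matrix (Fin m) (Fin m) ℂ)))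
    (hBd : ∃ u : GL (Fin m) ℂ,
      Matrix.IsDiag ((↑u⁻¹ : Matrix (Fin m) (Fin m) ℂ) * B * (↑u : Matrix (Fin m) (Fin m) ℂ)))
    (dA dB : Fin m → ℂ) (g h : GL (Fin m) ℂ)
    (hg₁ : IsUpper ((↑g⁻¹ : Matrix (Fin m) (Fin m) ℂ) * A * (↑g : Matrix (Fin m) (Fin m) ℂ)))
    (hg₂ : ∀ i, ((↑g⁻¹ : Matrix (Fin m) (Fin m) ℂ) * A * (↑g : Matrix (Fin m) (Fin m) ℂ)) i i = dA i)
    (hg₃ : IsLower ((↑g⁻¹ : Matrix (Fin m) (Fin m) ℂ) * B * (↑g : Matrix (Fin m) (Fin m) ℂ)))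
    (hg₄ : ∀ i, ((↑g⁻¹ : Matrix (Fin m) (Fin m) ℂ) * B * (↑g : Matrix (Fin m) (Fin m) ℂ)) i i = dB i)
    (hh₁ : IsUpper ((↑h⁻¹ : Matrix (Fin m) (Fin m) ℂ) * A * (↑h : Matrix (Fin m) (Fin m) ℂ)))
    (hh₂ : ∀ i, ((↑h⁻¹ : Matrix (Fin m) (Fin m) ℂ) * A * (↑h : Matrix (Fin m) (Fin m) ℂ)) i i = dA i)
    (hh₃ : IsLower ((↑h⁻¹ : Matrix (Fin m) (Fin m) ℂ) * B * (↑h : Matrix (Fin m) (Fin m) ℂ)))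
    (hh₄ : ∀ i, ((↑h⁻¹ : Matrix (Fin m) (Fin m) ℂ) * B * (↑h : Matrix (Fin m) (Fin m) ℂ)) i i = dB i) :
    Matrix.IsDiag ((↑g⁻¹ : Matrix (Fin m) (Fin m) ℂ) * (↑h : Matrix (Fin m) (Fin m) ℂ)) := by
  rw [isUpper_iff_isUpperTriangular] at hg₁ hh₁
  rw [isLower_iff_isLowerTriangular] at hg₃ hh₃
  have hdA : Injective dA := hA.injective_of_charpoly_eq hAd <| by
    rw [← charpoly_units_inv_conj g, charpoly_of_isUpperTriangular _ hg₁]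
    simp only [hg₂]
  have hdB : Injective dB := hB.injective_of_charpoly_eq hBd <| by
    rw [← charpoly_units_inv_conj g, charpoly_of_isLowerTriangular _ hg₃]
    simp only [hg₄]
  have hupper := isUpperTriangular_of_mul_eq_mul hdA hg₁ hh₁ hg₂ hh₂ (Units.inv_mul_mul_conj g h A)
  have hlower := isLowerTriangular_of_mul_eq_mul hdB hg₃ hh₃ hg₄ hh₄ (Units.inv_mul_mul_conj g h B)
  intro i j hij
  rcases hij.lt_or_gt with hlt | hlt
  · exact hlower hlt
  · exact hupper hlt
end

section
/- Let A be an m×m complex matrix with all eigenspaces one-dimensional, having the all-ones vector as an eigenvector with eigenvalue λ. Let Â be the (m-1)×(m-1) block obtained by conjugating by Ξ and deleting the last row and column. Then all eigenspaces of Â are also one-dimensional. -/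
def Xi (m : ℕ) : Matrix (Fin (m + 1)) (Fin (m + 1)) ℂ :=
  fun i j => if j = Fin.last m then 1 else if i = j then 1 else 0

/-!
Write `B = Ξ⁻¹AΞ`. Since `Ξ e_last = 𝟙`, the vector `e_last` is an eigenvector of `B`, so the
last column of `B - μ` vanishes off the diagonal. Transposing, extension by zero embeds
`ker (Âᵀ - μ)` into `ker (Bᵀ - μ)`; as transposition and conjugation preserve nullity,
`dim ker (Â - μ) ≤ dim ker (B - μ) = dim ker (A - μ) ≤ 1`.
-/

open Matrix Module LinearMap

namespace Matrix

variable {K : Type*} [Field K]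

theorem rank_add_finrank_ker_toLin' {m n : Type*} [Fintype n] [DecidableEq n]
    (M : Matrix m n K) : M.rank + finrank K (ker (toLin' M)) = Fintype.card n := by
  rw [toLin'_apply', rank, finrank_range_add_finrank_ker, finrank_fintype_fun_eq_card]

section Square

variable {n : Type*} [Fintype n] [DecidableEq n]

theorem finrank_ker_toLin'_eq_of_rank_eq {M N : Matrix n n K} (h : M.rank = N.rank) :
    finrank K (ker (toLin' M)) = finrank K (ker (toLin' N)) := by
  have hM := M.rank_add_finrank_ker_toLin'
  have hN := N.rank_add_finrank_ker_toLin'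
  omega

theorem finrank_ker_toLin'_transpose (M : Matrix n n K) :
    finrank K (ker (toLin' Mᵀ)) = finrank K (ker (toLin' M)) :=
  finrank_ker_toLin'_eq_of_rank_eq M.rank_transpose

theorem finrank_ker_toLin'_conj {P : Matrix n n K} (hP : IsUnit P.det) (M : Matrix n n K) :
    finrank K (ker (toLin' (P⁻¹ * M * P))) = finrank K (ker (toLin' M)) := by
  refine finrank_ker_toLin'_eq_of_rank_eq ?_
  rw [rank_mul_eq_left_of_isUnit_det _ _ hP,
    rank_mul_eq_right_of_isUnit_det _ _ (isUnit_nonsing_inv_det_iff.mpr hP)]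

theorem conj_sub_smul_one {P : Matrix n n K} (hP : IsUnit P.det) (M : Matrix n n K) (μ : K) :
    P⁻¹ * M * P - μ • 1 = P⁻¹ * (M - μ • 1) * P := by
  rw [Matrix.mul_sub, Matrix.sub_mul, Matrix.mul_smul, Matrix.smul_mul, Matrix.mul_one,
    nonsing_inv_mul P hP]

theorem conj_mulVec_eq_smul {P : Matrix n n K} (hP : IsUnit P.det) {M : Matrix n n K}
    {u v : n → K} {c : K} (hv : P *ᵥ v = u) (hu : M *ᵥ u = c • u) :
    (P⁻¹ * M * P) *ᵥ v = c • v := by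
  rw [← mulVec_mulVec, hv, ← mulVec_mulVec, hu, mulVec_smul, ← hv, mulVec_mulVec,
    nonsing_inv_mul P hP, one_mulVec]

end Square

theorem finrank_ker_toLin'_submatrix_castSucc_le {m : ℕ}
    (M : Matrix (Fin (m + 1)) (Fin (m + 1)) K) (hM : ∀ i : Fin m, M i.castSucc (Fin.last m) = 0) :
    finrank K (ker (toLin' (M.submatrix Fin.castSucc Fin.castSucc))) ≤
      finrank K (ker (toLin' M)) := by
  set N := M.submatrix Fin.castSucc Fin.castSucc
  set ι := Function.ExtendByZero.linearMap K (Fin.castSucc (n := m))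
  have hι_castSucc (x : Fin m → K) (i : Fin m) : ι x i.castSucc = x i :=
    (Fin.castSucc_injective m).extend_apply _ _ _
  have hι_last (x : Fin m → K) : ι x (Fin.last m) = 0 :=
    Function.extend_apply' _ _ _ fun ⟨i, hi⟩ => Fin.castSucc_ne_last i hi
  have hι_inj : Function.Injective ι := fun x y hxy =>
    funext fun i => by simpa [hι_castSucc] using congrFun hxy i.castSucc
  have hmaps : ∀ x ∈ ker (toLin' Nᵀ), ι x ∈ ker (toLin' Mᵀ) := by
    intro x hx
    rw [mem_ker, toLin'_apply] at hx ⊢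
    have hsum (k : Fin (m + 1)) : (Mᵀ *ᵥ ι x) k = ∑ i, M i.castSucc k * x i := by
      simp [mulVec, dotProduct, Fin.sum_univ_castSucc, hι_castSucc, hι_last]
    funext k
    induction k using Fin.lastCases with
    | last => rw [hsum]; simp [hM]
    | cast k => rw [hsum]; simpa [N, mulVec, dotProduct] using congrFun hx k
  rw [← finrank_ker_toLin'_transpose N, ← finrank_ker_toLin'_transpose M]
  exact finrank_le_finrank_of_injective (f := ι.restrict hmaps)
    fun x y hxy => Subtype.ext (hι_inj (congrArg Subtype.val hxy))

end Matrix

theorem oneDimEig_of_finrank_ker_le {m n : ℕ} {A : Matrix (Fin m) (Fin m) ℂ}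
    {B : Matrix (Fin n) (Fin n) ℂ} (hB : OneDimEig B)
    (hle : ∀ μ : ℂ, finrank ℂ (ker (toLin' (A - μ • 1))) ≤ finrank ℂ (ker (toLin' (B - μ • 1)))) :
    OneDimEig A := by
  intro μ hA
  have hA_pos := Submodule.finrank_eq_zero.not.mpr hA
  have hB_ne : ker (toLin' (B - μ • 1)) ≠ ⊥ := fun hB_bot => by
    have := hle μ
    rw [hB_bot, finrank_bot] at this
    omega
  have := hB μ hB_ne
  have := hle μ
  omega

theorem Xi_mulVec_single_last (m : ℕ) : Xi m *ᵥ Pi.single (Fin.last m) 1 = fun _ => 1 := by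
  ext i
  simp [Xi]

theorem det_Xi (m : ℕ) : (Xi m).det = 1 := by
  have hXi : (Xi m).IsUpperTriangular := fun i j (hji : j < i) => by
    simp [Xi, (hji.trans_le (Fin.le_last i)).ne, hji.ne']
  rw [det_of_isUpperTriangular hXi]
  refine Finset.prod_eq_one fun i _ => ?_
  by_cases hi : i = Fin.last m <;> simp [Xi, hi]

/-- if all eigenspaces of `A` are one-dimensional and the all-ones vector
is an eigenvector of `A` with eigenvalue `λ`, then all eigenspaces of the upper-left
block `Â` of `Ξ⁻¹AΞ` are one-dimensional as well. -/
theorem block_one_dim_eigenspaces {m : ℕ} (A : Matrix (Fin (m + 1)) (Fin (m + 1)) ℂ)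
    (lam : ℂ) (h : A.mulVec (fun _ => 1) = (fun _ => lam : Fin (m + 1) → ℂ))
    (hA : OneDimEig A) :
    OneDimEig (((Xi m)⁻¹ * A * Xi m).submatrix Fin.castSucc Fin.castSucc) := by
  have hXi : IsUnit (Xi m).det := by rw [det_Xi]; exact isUnit_one
  set B := (Xi m)⁻¹ * A * Xi m
  have hlast : B *ᵥ Pi.single (Fin.last m) 1 = lam • Pi.single (Fin.last m) 1 :=
    conj_mulVec_eq_smul hXi (Xi_mulVec_single_last m) (by rw [h]; ext; simp)
  refine oneDimEig_of_finrank_ker_le hA fun μ => ?_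
  have hcol (i : Fin m) : (B - μ • 1) i.castSucc (Fin.last m) = 0 := by
    have hne := (Fin.castSucc_lt_last i).ne
    simpa [mulVec_single_one, one_apply, hne] using congrFun hlast i.castSucc
  calc finrank ℂ (ker (toLin' (B.submatrix Fin.castSucc Fin.castSucc - μ • 1)))
      = finrank ℂ (ker (toLin' ((B - μ • 1).submatrix Fin.castSucc Fin.castSucc))) := by
        rw [← submatrix_one _ (Fin.castSucc_injective m)]
        rfl
    _ ≤ finrank ℂ (ker (toLin' (B - μ • 1))) := finrank_ker_toLin'_submatrix_castSucc_le _ hcol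
    _ = finrank ℂ (ker (toLin' (A - μ • 1))) := by
        rw [conj_sub_smul_one hXi, finrank_ker_toLin'_conj hXi]
end
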